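/- Strategy existence for the exponential: for any opponent game O, the game !O has a strategy if and only if O has a strategy. -/

import Mathlib

/-- Rose trees: the unlabeled shape of a game tree. -/
inductive RTree : Type where
  | node : List RTree → RTree

mutual
/-- An opponent game: a finite list of player games (its children). -/
inductive OGame : Type where
  | mk : List PGame → OGame
/-- A player game: a finite list of opponent games (its children). -/
inductive PGame : Type where
  | mk : List OGame → PGame
end

mutual
/-- The dual of an opponent game. -/
def OGame.dual : OGame → PGame
  | .mk ps => .mk (ps.attach.map fun ⟨p, _⟩ => p.dual)
/-- The dual of a player game. -/
def PGame.dual : PGame → OGame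
  | .mk os => .mk (os.attach.map fun ⟨o, _⟩ => o.dual)
end

mutual
/-- Strategy existence in an opponent game: a conjunction over children. -/
def OGame.strat : OGame → Bool
  | .mk ps => ps.attach.all fun ⟨p, _⟩ => p.strat
/-- Strategy existence in a player game: a disjunction over children. -/
def PGame.strat : PGame → Bool
  | .mk os => os.attach.any fun ⟨o, _⟩ => o.strat
end

mutual
/-- Tensor of opponent games: `O ⊗ O' = (P_i ⊗ˡ O', O ⊗ʳ P'_k | …)`. -/
def otimes : OGame → OGame → OGame
  | .mk ps, .mk qs => .mk ((ps.attach.map fun ⟨p, _⟩ => oxl p (.mk qs)) ++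
      (qs.attach.map fun ⟨q, _⟩ => oxr (.mk ps) q))
  termination_by o o' => sizeOf o + sizeOf o'
  decreasing_by
  · have := List.sizeOf_lt_of_mem ‹p ∈ ps›; simp_all; omega
  · have := List.sizeOf_lt_of_mem ‹q ∈ qs›; simp_all; omega
/-- Mixed tensor `O ⊗ʳ P = {O ⊗ O_j | j ∈ J}`. -/
def oxr : OGame → PGame → PGame
  | o, .mk os => .mk (os.attach.map fun ⟨oj, _⟩ => otimes o oj)
  termination_by o p => sizeOf o + sizeOf p
  decreasing_by
  · have := List.sizeOf_lt_of_mem ‹oj ∈ os›; simp_all; omega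
/-- Mixed tensor `P ⊗ˡ O = {O_j ⊗ O | j ∈ J}`. -/
def oxl : PGame → OGame → PGame
  | .mk os, o => .mk (os.attach.map fun ⟨oj, _⟩ => otimes oj o)
  termination_by p o => sizeOf p + sizeOf o
  decreasing_by
  · have := List.sizeOf_lt_of_mem ‹oj ∈ os›; simp_all; omega
end

mutual
/-- Par of player games: `P ⅋ P' = {O_j ⅋ˡ P', P ⅋ʳ O'_k | …}`. -/
def parr : PGame → PGame → PGame
  | .mk os, .mk qs => .mk ((os.attach.map fun ⟨o, _⟩ => parrOP o (.mk qs)) ++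
      (qs.attach.map fun ⟨q, _⟩ => parrPO (.mk os) q))
  termination_by p p' => sizeOf p + sizeOf p'
  decreasing_by
  · have := List.sizeOf_lt_of_mem ‹o ∈ os›; simp_all; omega
  · have := List.sizeOf_lt_of_mem ‹q ∈ qs›; simp_all; omega
/-- Mixed par `P ⅋ʳ O = (P ⅋ P_i | i ∈ I)`. -/
def parrPO : PGame → OGame → OGame
  | p, .mk ps => .mk (ps.attach.map fun ⟨pi, _⟩ => parr p pi)
  termination_by p o => sizeOf p + sizeOf o
  decreasing_by
  · have := List.sizeOf_lt_of_mem ‹pi ∈ ps›; simp_all; omega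
/-- Mixed par `O ⅋ˡ P = (P_i ⅋ P | i ∈ I)`. -/
def parrOP : OGame → PGame → OGame
  | .mk ps, p => .mk (ps.attach.map fun ⟨pi, _⟩ => parr pi p)
  termination_by o p => sizeOf o + sizeOf p
  decreasing_by
  · have := List.sizeOf_lt_of_mem ‹pi ∈ ps›; simp_all; omega
end

mutual
/-- The exponential `!O`: `!() = ()` and `!O = ⊗_{i∈I} (b_i : !'P_i)` for `I ≠ ∅`. -/
def bang : OGame → OGame
  | .mk [] => .mk []
  | .mk (p :: ps) =>
      (ps.attach.map fun ⟨q, _⟩ => OGame.mk [bang' q]).foldl otimes (OGame.mk [bang' p])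
/-- The auxiliary exponential `!'{a_j : O_j} = {a_j : !O_j}`. -/
def bang' : PGame → PGame
  | .mk os => .mk (os.attach.map fun ⟨o, _⟩ => bang o)
end

mutual
/-- Underlying unlabeled tree of an opponent game. -/
def OGame.toTree : OGame → RTree
  | .mk ps => .node (ps.attach.map fun ⟨p, _⟩ => p.toTree)
/-- Underlying unlabeled tree of a player game. -/
def PGame.toTree : PGame → RTree
  | .mk os => .node (os.attach.map fun ⟨o, _⟩ => o.toTree)
end

/-- Number of nodes (including the root). -/
def RTree.nodes : RTree → ℕ
  | .node cs => 1 + (cs.attach.map fun ⟨c, _⟩ => c.nodes).sum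

/-- Number of parent-child edges. -/
def RTree.edges : RTree → ℕ
  | .node cs => cs.length + (cs.attach.map fun ⟨c, _⟩ => c.edges).sum

/-- Number of leaves. -/
def RTree.leaves : RTree → ℕ
  | .node [] => 1
  | .node cs => (cs.attach.map fun ⟨c, _⟩ => c.leaves).sum

/-- Uniform size: `u[leaf] = 0`, `u[node with n children] = (n-1) + Σ u[child]`. -/
def RTree.usize : RTree → ℕ
  | .node [] => 0
  | .node cs => (cs.length - 1) + (cs.attach.map fun ⟨c, _⟩ => c.usize).sum

/-- Depth: leaves have depth 0. -/
def RTree.depth : RTree → ℕ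
  | .node cs => (cs.attach.map fun ⟨c, _⟩ => c.depth + 1).foldr max 0

/-- `profile t k` is the number of nodes of `t` at depth `k`. -/
def RTree.profile : RTree → ℕ → ℕ
  | _, 0 => 1
  | .node cs, k + 1 => (cs.attach.map fun ⟨c, _⟩ => c.profile k).sum

mutual
/-- Number of player nodes of an opponent game. -/
def OGame.pnodes : OGame → ℕ
  | .mk ps => (ps.attach.map fun ⟨p, _⟩ => p.pnodes).sum
/-- Number of player nodes of a player game (the root counts). -/
def PGame.pnodes : PGame → ℕ
  | .mk os => 1 + (os.attach.map fun ⟨o, _⟩ => o.pnodes).sum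
end

mutual
/-- Number of edges leaving opponent nodes, for an opponent game. -/
def OGame.eo : OGame → ℕ
  | .mk ps => ps.length + (ps.attach.map fun ⟨p, _⟩ => p.eo).sum
/-- Number of edges leaving opponent nodes, for a player game. -/
def PGame.eo : PGame → ℕ
  | .mk os => (os.attach.map fun ⟨o, _⟩ => o.eo).sum
end

mutual
/-- Number of edges leaving player nodes, for an opponent game. -/
def OGame.ep : OGame → ℕ
  | .mk ps => (ps.attach.map fun ⟨p, _⟩ => p.ep).sum
/-- Number of edges leaving player nodes, for a player game. -/
def PGame.ep : PGame → ℕ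
  | .mk os => os.length + (os.attach.map fun ⟨o, _⟩ => o.ep).sum
end

/-- `γ(i,j) = 1` if `i` or `j` is zero or even, else `0`. -/
def gammaCoef (i j : ℕ) : ℕ :=
  if i = 0 ∨ j = 0 ∨ i % 2 = 0 ∨ j % 2 = 0 then 1 else 0

mutual
/-- The single-branch player chain `L_n`. -/
def Lp : ℕ → PGame
  | 0 => .mk []
  | n + 1 => .mk [Lo n]
/-- The single-branch opponent chain `L'_n`. -/
def Lo : ℕ → OGame
  | 0 => .mk []
  | n + 1 => .mk [Lp n]
end

/-!
Strategy existence is multiplicative for the tensor, `‖O ⊗ O'‖ = ‖O‖ ∧ ‖O'‖`, which is proved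
together with the corresponding facts for the mixed tensors `⊗ˡ`, `⊗ʳ` by simultaneous induction.
Hence `‖!O‖` is the conjunction of the `‖!'P_i‖`, and since `!'` only replaces every child by its
exponential, `‖!'P‖ = ‖P‖` and `‖!O‖ = ‖O‖` follow by a second simultaneous induction.
-/

@[simp] theorem OGame.strat_mk (ps : List PGame) : (OGame.mk ps).strat = ps.all PGame.strat := by
  simp only [OGame.strat, List.all_subtype, List.unattach_attach]

@[simp] theorem PGame.strat_mk (os : List OGame) : (PGame.mk os).strat = os.any OGame.strat := by
  simp only [PGame.strat, List.any_subtype, List.unattach_attach]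

mutual
theorem strat_otimes : ∀ o o' : OGame, (otimes o o').strat = (o.strat && o'.strat)
  | .mk ps, .mk qs => by
    have hl : ∀ p ∈ ps, (oxl p (.mk qs)).strat = (p.strat && (OGame.mk qs).strat) :=
      fun p _ => strat_oxl p _
    have hr : ∀ q ∈ qs, (oxr (.mk ps) q).strat = ((OGame.mk ps).strat && q.strat) :=
      fun q _ => strat_oxr _ q
    rw [otimes, Bool.eq_iff_iff]
    simp +contextual [List.all_eq_true, hl, hr]
    grind
  termination_by o o' => sizeOf o + sizeOf o'
theorem strat_oxr : ∀ (o : OGame) (p : PGame), (oxr o p).strat = (o.strat && p.strat)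
  | o, .mk os => by
    have h : ∀ o' ∈ os, (otimes o o').strat = (o.strat && o'.strat) :=
      fun o' _ => strat_otimes o o'
    rw [oxr, Bool.eq_iff_iff]
    simp [List.any_eq_true]
    grind
  termination_by o p => sizeOf o + sizeOf p
theorem strat_oxl : ∀ (p : PGame) (o : OGame), (oxl p o).strat = (p.strat && o.strat)
  | .mk os, o => by
    have h : ∀ o' ∈ os, (otimes o' o).strat = (o'.strat && o.strat) :=
      fun o' _ => strat_otimes o' o
    rw [oxl, Bool.eq_iff_iff]
    simp [List.any_eq_true]
    grind
  termination_by p o => sizeOf p + sizeOf o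
end

theorem strat_foldl_otimes (l : List OGame) (o : OGame) :
    (l.foldl otimes o).strat = (o.strat && l.all OGame.strat) := by
  induction l generalizing o with
  | nil => simp
  | cons o' l ih => simp [ih, strat_otimes, Bool.and_assoc]

mutual
theorem strat_bang : ∀ o : OGame, (bang o).strat = o.strat
  | .mk [] => by rw [bang]
  | .mk (p :: ps) => by
    have h : ∀ q ∈ p :: ps, (bang' q).strat = q.strat := fun q _ => strat_bang' q
    rw [bang, strat_foldl_otimes, Bool.eq_iff_iff]
    simp +contextual [List.all_eq_true, h]
  termination_by o => sizeOf o
theorem strat_bang' : ∀ p : PGame, (bang' p).strat = p.strat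
  | .mk os => by
    have h : ∀ o ∈ os, (bang o).strat = o.strat := fun o _ => strat_bang o
    rw [bang', Bool.eq_iff_iff]
    simp [List.any_eq_true]
    grind
  termination_by p => sizeOf p
end

/-- !O has a strategy iff O has a strategy. -/
theorem bang_strat (O : OGame) : (bang O).strat = true ↔ O.strat = true := by
  rw [strat_bang]
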